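/- Let ≤ be a well-order on W and let Π be a ≤-compatible term-rewriting system on V = W →₀ k. The following are equivalent: (1) Π is convergent; (2) Π is confluent; (3) V is the internal direct sum of the subspaces k·Irr(Π) and I_Π, i.e., k·Irr(Π) + I_Π = V and k·Irr(Π) ∩ I_Π = 0. -/

import Mathlib

/-- One-step rewriting relation of a term-rewriting system `S ⊆ W × (W →₀ k)`. -/
def RewStep {k W : Type*} [Field k] (S : Set (W × (W →₀ k))) (f g : W →₀ k) : Prop :=
  ∃ t v, (t, v) ∈ S ∧ f t ≠ 0 ∧ g = f - Finsupp.single t (f t) + f t • v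

/-- A rewriting system is `≤`-compatible if every monomial in the support of a
right-hand side is strictly smaller than the left-hand side. -/
def RewCompatible {k W : Type*} [Field k] [LinearOrder W] (S : Set (W × (W →₀ k))) : Prop :=
  ∀ p ∈ S, ∀ w ∈ (p.2 : W →₀ k).support, w < p.1

/-- Termination: there is no infinite chain of one-step rewritings. -/
def RewTerminating {k W : Type*} [Field k] (S : Set (W × (W →₀ k))) : Prop :=
  ¬ ∃ f : ℕ → (W →₀ k), ∀ n, RewStep S (f n) (f (n + 1))

/-- Confluence: any two rewritings of a common element are joinable. -/
def RewConfluent {k W : Type*} [Field k] (S : Set (W × (W →₀ k))) : Prop :=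
  ∀ f g₁ g₂ : W →₀ k, Relation.ReflTransGen (RewStep S) f g₁ →
    Relation.ReflTransGen (RewStep S) f g₂ →
      ∃ h, Relation.ReflTransGen (RewStep S) g₁ h ∧ Relation.ReflTransGen (RewStep S) g₂ h

/-- The linear span `I_S` of the elements `δ_t - v` for the rules `(t, v)` of `S`. -/
noncomputable def RewIdeal {k W : Type*} [Field k] (S : Set (W × (W →₀ k))) : Submodule k (W →₀ k) :=
  Submodule.span k {x : W →₀ k | ∃ p ∈ S, x = Finsupp.single p.1 (1 : k) - p.2}

/-- `Irr(S)`: the set of basis elements that are not the left-hand side of any rule. -/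
def RewIrr {k W : Type*} [Field k] (S : Set (W × (W →₀ k))) : Set W :=
  {w | ∀ v, (w, v) ∉ S}

/-- `k·Irr(S)`: the linear span of the irreducible basis elements. -/
noncomputable def RewIrrSpan {k W : Type*} [Field k] (S : Set (W × (W →₀ k))) : Submodule k (W →₀ k) :=
  Submodule.span k ((fun w => Finsupp.single w (1 : k)) '' RewIrr S)

/-!
A rewriting step `f → g` at a rule `(t, v)` replaces the coefficient of `t` by terms below `t`,
so the supports decrease in the colexicographic order (compare at the largest differing
monomial); since `W` is well-ordered, `Π` terminates and every `f` reduces to a normal form in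
`k·Irr(Π)`, with `f - g ∈ I_Π`. This gives `k·Irr(Π) + I_Π = V` unconditionally. If
`k·Irr(Π) ∩ I_Π = 0`, two normal forms of `f` differ by an element of this intersection,
hence agree: this is confluence. Conversely, under confluence joinability is an equivalence
compatible with addition and scaling, so every element of `I_Π` is joinable with `0`; an
element of `k·Irr(Π) ∩ I_Π` admits no rewriting step, hence equals `0`.
-/

open Relation Finsupp

section Field

variable {k W : Type*} [Field k] {S : Set (W × (W →₀ k))}

theorem RewStep.sub_mem_rewIdeal {f g : W →₀ k} (h : RewStep S f g) : f - g ∈ RewIdeal S := by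
  obtain ⟨t, v, hmem, -, rfl⟩ := h
  have hgen : single t (1 : k) - v ∈ RewIdeal S := Submodule.subset_span ⟨(t, v), hmem, rfl⟩
  convert (RewIdeal S).smul_mem (f t) hgen using 1
  rw [smul_sub, smul_single_one]
  abel

theorem sub_mem_rewIdeal_of_reflTransGen {f g : W →₀ k} (h : ReflTransGen (RewStep S) f g) :
    f - g ∈ RewIdeal S := by
  induction h with
  | refl => simp
  | tail _ hstep ih => simpa using add_mem ih hstep.sub_mem_rewIdeal

theorem RewStep.smul {f g : W →₀ k} (h : RewStep S f g) {c : k} (hc : c ≠ 0) :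
    RewStep S (c • f) (c • g) := by
  obtain ⟨t, v, hmem, hft, rfl⟩ := h
  refine ⟨t, v, hmem, by simpa using mul_ne_zero hc hft, ?_⟩
  simp only [Finsupp.smul_apply, smul_eq_mul, smul_add, smul_sub, smul_single, smul_smul]

theorem reflTransGen_rewStep_smul {f g : W →₀ k} (h : ReflTransGen (RewStep S) f g) {c : k}
    (hc : c ≠ 0) : ReflTransGen (RewStep S) (c • f) (c • g) :=
  ReflTransGen.lift (c • ·) (fun _ _ hstep => RewStep.smul hstep hc) _ _ h

theorem reflTransGen_rewStep_rewrite {t : W} {v : W →₀ k} (hmem : (t, v) ∈ S) (f : W →₀ k) :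
    ReflTransGen (RewStep S) f (f - single t (f t) + f t • v) := by
  by_cases hft : f t = 0
  · simpa [hft] using .refl
  · exact .single ⟨t, v, hmem, hft, rfl⟩

theorem mem_rewIrrSpan_iff {f : W →₀ k} : f ∈ RewIrrSpan S ↔ ∀ w ∈ f.support, w ∈ RewIrr S := by
  rw [RewIrrSpan, ← supported_eq_span_single, mem_supported]
  rfl

theorem not_rewStep_of_mem_rewIrrSpan {f g : W →₀ k} (hf : f ∈ RewIrrSpan S) :
    ¬ RewStep S f g := by
  rintro ⟨t, v, hmem, hft, -⟩
  exact mem_rewIrrSpan_iff.mp hf t (mem_support_iff.2 hft) v hmem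

theorem eq_of_reflTransGen_of_mem_rewIrrSpan {f g : W →₀ k} (hf : f ∈ RewIrrSpan S)
    (h : ReflTransGen (RewStep S) f g) : g = f := by
  induction h with
  | refl => rfl
  | tail _ hstep ih => exact absurd (ih ▸ hstep) (not_rewStep_of_mem_rewIrrSpan hf)

end Field

section Compatible

variable {k W : Type*} [Field k] [LinearOrder W] {S : Set (W × (W →₀ k))}

theorem RewCompatible.rhs_apply_eq_zero (hS : RewCompatible S) {t : W} {v : W →₀ k}
    (hmem : (t, v) ∈ S) {w : W} (hw : t ≤ w) : v w = 0 :=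
  notMem_support_iff.1 fun hv => (hS (t, v) hmem w hv).not_ge hw

theorem RewCompatible.rewStep_single_sub_rhs (hS : RewCompatible S) {t : W} {v : W →₀ k}
    (hmem : (t, v) ∈ S) : RewStep S (single t 1 - v) 0 := by
  have hcoeff : (single t (1 : k) - v) t = 1 := by simp [hS.rhs_apply_eq_zero hmem le_rfl]
  refine ⟨t, v, hmem, by simp [hcoeff], ?_⟩
  rw [hcoeff, one_smul]
  abel

/-- Rewriting `f` and `f + p` at the same rule yields the same result, because the rule does not
produce its own left-hand side. -/
theorem RewStep.join_add (hS : RewCompatible S) {f g : W →₀ k} (h : RewStep S f g)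
    (p : W →₀ k) : Join (ReflTransGen (RewStep S)) (f + p) (g + p) := by
  obtain ⟨t, v, hmem, -, rfl⟩ := h
  have hcoeff : (f - single t (f t) + f t • v + p) t = p t := by
    simp [hS.rhs_apply_eq_zero hmem le_rfl]
  refine ⟨_, reflTransGen_rewStep_rewrite hmem (f + p), ?_⟩
  convert reflTransGen_rewStep_rewrite hmem (f - single t (f t) + f t • v + p) using 1
  rw [hcoeff, Finsupp.add_apply, single_add, add_smul]
  abel

theorem RewCompatible.wellFounded_flip_rewStep [WellFoundedLT W] (hS : RewCompatible S) :
    WellFounded (flip (RewStep S)) := by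
  have hs : WellFounded fun a b : k => a = 0 ∧ b ≠ 0 :=
    ⟨fun a => ⟨a, fun b ⟨hb, _⟩ => ⟨b, fun _ ⟨_, hb'⟩ => absurd hb hb'⟩⟩⟩
  refine Subrelation.wf ?_ (Lex.wellFounded' (r := fun a b : W => b < a) (fun _ h => h.2 rfl) hs
    wellFounded_lt)
  rintro g f ⟨t, v, hmem, hft, rfl⟩
  refine lex_def.2 ⟨t, fun w hw => ?_, ?_, hft⟩
  · simp [hw.ne, hS.rhs_apply_eq_zero hmem hw.le]
  · simp [hS.rhs_apply_eq_zero hmem le_rfl]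

theorem RewCompatible.rewTerminating [WellFoundedLT W] (hS : RewCompatible S) :
    RewTerminating S := by
  rintro ⟨f, hf⟩
  exact (wellFounded_iff_isEmpty_descending_chain.1 hS.wellFounded_flip_rewStep).elim ⟨f, hf⟩

theorem RewCompatible.exists_reflTransGen_mem_rewIrrSpan [WellFoundedLT W]
    (hS : RewCompatible S) (f : W →₀ k) :
    ∃ g, ReflTransGen (RewStep S) f g ∧ g ∈ RewIrrSpan S := by
  induction f using hS.wellFounded_flip_rewStep.induction with
  | _ f ih =>
  by_cases hf : f ∈ RewIrrSpan S
  · exact ⟨f, .refl, hf⟩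
  obtain ⟨t, ht, htS⟩ : ∃ t ∈ f.support, t ∉ RewIrr S := by
    simpa [mem_rewIrrSpan_iff] using hf
  obtain ⟨v, hmem⟩ : ∃ v, (t, v) ∈ S := by simpa [RewIrr] using htS
  have hstep : RewStep S f _ := ⟨t, v, hmem, mem_support_iff.1 ht, rfl⟩
  obtain ⟨g, hg, hgIrr⟩ := ih _ hstep
  exact ⟨g, .head hstep hg, hgIrr⟩

theorem RewCompatible.rewIrrSpan_sup_rewIdeal [WellFoundedLT W] (hS : RewCompatible S) :
    RewIrrSpan S ⊔ RewIdeal S = ⊤ := by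
  refine eq_top_iff.2 fun f _ => ?_
  obtain ⟨g, hfg, hg⟩ := hS.exists_reflTransGen_mem_rewIrrSpan f
  simpa using Submodule.add_mem_sup hg (sub_mem_rewIdeal_of_reflTransGen hfg)

theorem RewCompatible.rewConfluent [WellFoundedLT W] (hS : RewCompatible S)
    (hinf : RewIrrSpan S ⊓ RewIdeal S = ⊥) : RewConfluent S := by
  intro f g₁ g₂ h₁ h₂
  obtain ⟨n₁, hgn₁, hn₁⟩ := hS.exists_reflTransGen_mem_rewIrrSpan g₁
  obtain ⟨n₂, hgn₂, hn₂⟩ := hS.exists_reflTransGen_mem_rewIrrSpan g₂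
  have hdiff : n₁ - n₂ ∈ RewIrrSpan S ⊓ RewIdeal S := by
    refine ⟨sub_mem hn₁ hn₂, ?_⟩
    simpa using sub_mem (sub_mem_rewIdeal_of_reflTransGen (h₂.trans hgn₂))
      (sub_mem_rewIdeal_of_reflTransGen (h₁.trans hgn₁))
  rw [hinf, Submodule.mem_bot, sub_eq_zero] at hdiff
  exact ⟨n₁, hgn₁, hdiff ▸ hgn₂⟩

namespace RewConfluent

theorem join_add (hC : RewConfluent S) (hS : RewCompatible S) {f g : W →₀ k}
    (h : Join (ReflTransGen (RewStep S)) f g) (p : W →₀ k) :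
    Join (ReflTransGen (RewStep S)) (f + p) (g + p) := by
  have hE := equivalence_join hC
  have hred : ∀ {a b}, ReflTransGen (RewStep S) a b →
      Join (ReflTransGen (RewStep S)) (a + p) (b + p) := by
    intro a b hab
    induction hab with
    | refl => exact hE.refl _
    | tail _ hstep ih => exact hE.trans ih (hstep.join_add hS p)
  obtain ⟨c, hfc, hgc⟩ := h
  exact hE.trans (hred hfc) (hE.symm (hred hgc))

theorem join_zero_of_mem_rewIdeal (hC : RewConfluent S) (hS : RewCompatible S) {x : W →₀ k}
    (hx : x ∈ RewIdeal S) :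
    Join (ReflTransGen (RewStep S)) x 0 := by
  have hE := equivalence_join hC
  induction hx using Submodule.span_induction with
  | mem _ hgen =>
    obtain ⟨⟨t, v⟩, hmem, rfl⟩ := hgen
    exact ⟨0, .single (hS.rewStep_single_sub_rhs hmem), .refl⟩
  | zero => exact hE.refl 0
  | add a b _ _ ha hb => exact hE.trans (by simpa using hC.join_add hS ha b) hb
  | smul c a _ ha =>
    obtain rfl | hc := eq_or_ne c 0
    · simpa using hE.refl 0
    obtain ⟨u, hau, h0u⟩ := ha
    exact ⟨c • u, reflTransGen_rewStep_smul hau hc,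
      by simpa using reflTransGen_rewStep_smul h0u hc⟩

theorem rewIrrSpan_inf_rewIdeal (hC : RewConfluent S) (hS : RewCompatible S) :
    RewIrrSpan S ⊓ RewIdeal S = ⊥ := by
  refine eq_bot_iff.2 fun x ⟨hxIrr, hxI⟩ => ?_
  obtain ⟨u, hxu, h0u⟩ := hC.join_zero_of_mem_rewIdeal hS hxI
  rw [Submodule.mem_bot, ← eq_of_reflTransGen_of_mem_rewIrrSpan hxIrr hxu,
    eq_of_reflTransGen_of_mem_rewIrrSpan (zero_mem _) h0u]

end RewConfluent

end Compatible

/-- For a `≤`-compatible rewriting system over a well-ordered set, the following are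
equivalent: (1) the system is convergent (terminating and confluent); (2) it is
confluent; (3) `V` is the internal direct sum of `k·Irr(S)` and `I_S`. -/
theorem convergent_iff_confluent_iff_direct_sum {k W : Type*} [Field k] [LinearOrder W]
    [WellFoundedLT W] (S : Set (W × (W →₀ k))) (hS : RewCompatible S) :
    ((RewTerminating S ∧ RewConfluent S) ↔ RewConfluent S) ∧
      (RewConfluent S ↔
        (RewIrrSpan S ⊔ RewIdeal S = ⊤ ∧ RewIrrSpan S ⊓ RewIdeal S = ⊥)) := by
  exact ⟨⟨And.right, fun hC => ⟨hS.rewTerminating, hC⟩⟩,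
    fun hC => ⟨hS.rewIrrSpan_sup_rewIdeal, hC.rewIrrSpan_inf_rewIdeal hS⟩,
    fun ⟨_, hinf⟩ => hS.rewConfluent hinf⟩
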